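/- Every PL-triangulation of a closed PL-manifold admits only finitely many edge expansions (up to simplicial isomorphism). -/
import Mathlib


open scoped Classical

noncomputable section

/-- A (combinatorial) triangulation of a topological space `M`: a finite abstract
simplicial complex together with a homeomorphism from its geometric realization to `M`. -/
structure Triang (M : Type) [TopologicalSpace M] where
  V : Type
  [fintypeV : Fintype V]
  faces : Finset (Finset V)
  nonempty_of_mem : ∀ s ∈ faces, s.Nonempty
  down_closed : ∀ s ∈ faces, ∀ t, t ⊆ s → t.Nonempty → t ∈ faces
  homeo : {x : V → ℝ // (∀ v, 0 ≤ x v) ∧ (∑ v, x v) = 1 ∧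
      (Finset.univ.filter fun v => x v ≠ 0) ∈ faces} ≃ₜ M

attribute [instance] Triang.fintypeV

variable {M : Type} [TopologicalSpace M]

/-- Number of tetrahedra (3-simplices) of a triangulation. -/
def Triang.tetCount (T : Triang M) : ℕ :=
  (T.faces.filter fun s => s.card = 4).card

/-- `T'` is the result of the edge contraction of `T` along an edge `{a, b}`:
the two endpoints of the edge are identified and all faces are pushed forward. -/
def IsContraction (T T' : Triang M) : Prop :=
  ∃ (a b : T.V) (f : T.V → T'.V), a ≠ b ∧ ({a, b} : Finset T.V) ∈ T.faces ∧
    Function.Surjective f ∧ f a = f b ∧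
    (∀ x y : T.V, f x = f y → x = y ∨ ({x, y} : Finset T.V) = {a, b}) ∧
    T'.faces = T.faces.image fun s => s.image f

/-- One local move: an edge contraction or an edge expansion (inverse of a contraction). -/
def EdgeMove (T T' : Triang M) : Prop :=
  IsContraction T T' ∨ IsContraction T' T

/-- A sequence of `m` moves of type `R` relating `T` to `T'`. -/
def MoveChain (R : Triang M → Triang M → Prop) (T T' : Triang M) (m : ℕ) : Prop :=
  ∃ c : Fin (m + 1) → Triang M, c 0 = T ∧ c (Fin.last m) = T' ∧
    ∀ i : Fin m, R (c i.castSucc) (c i.succ)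

/-- Simplicial isomorphism of triangulations. -/
def TriangIso (T T' : Triang M) : Prop :=
  ∃ e : T.V ≃ T'.V, ∀ s : Finset T.V, s ∈ T.faces ↔ s.image e ∈ T'.faces

/-- The 3-dimensional real projective space, as the quotient of the unit sphere
in `ℝ⁴` by the antipodal identification. -/
def RP3 : Type :=
  Quot fun x y : Metric.sphere (0 : EuclideanSpace ℝ (Fin 4)) 1 =>
    (x : EuclideanSpace ℝ (Fin 4)) = -(y : EuclideanSpace ℝ (Fin 4))

instance : TopologicalSpace RP3 := by unfold RP3; infer_instance

/-- The real projective plane, as the quotient of the unit sphere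
in `ℝ³` by the antipodal identification. -/
def RP2 : Type :=
  Quot fun x y : Metric.sphere (0 : EuclideanSpace ℝ (Fin 3)) 1 =>
    (x : EuclideanSpace ℝ (Fin 3)) = -(y : EuclideanSpace ℝ (Fin 3))

instance : TopologicalSpace RP2 := by unfold RP2; infer_instance

/-- The set of connected components of a subset `S` of `M`. -/
def comps (S : Set M) : Set (Set M) :=
  {C | ∃ x ∈ S, C = connectedComponentIn S x}

/-- The image in `M` of the `k`-skeleton of a triangulation. -/
def Triang.skel (T : Triang M) (k : ℕ) : Set M :=
  (T.homeo : _ → M) '' {x | (Finset.univ.filter fun v => x.1 v ≠ 0).card ≤ k + 1}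

/-- `‖S‖`, the number of intersection points of `S` with the 1-skeleton of `T`. -/
def snorm (T : Triang M) (S : Set M) : ℕ :=
  (S ∩ T.skel 1).ncard


/-- If two triangulations have face sets transporting to the same finset of finsets
under vertex bijections to a common type `W`, they are simplicially isomorphic. -/
lemma triangIso_of_images_eq {M : Type} [TopologicalSpace M] {T₁ T₂ : Triang M}
    {W : Type} (e₁ : T₁.V ≃ W) (e₂ : T₂.V ≃ W)
    (h : T₁.faces.image (fun s => s.image e₁) = T₂.faces.image (fun s => s.image e₂)) :
    TriangIso T₁ T₂ := by
  classical
  refine ⟨e₁.trans e₂.symm, fun s => ?_⟩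
  have himg : ∀ s : Finset T₁.V,
      s.image (e₁.trans e₂.symm) = (s.image e₁).image e₂.symm := by
    intro s; rw [Finset.image_image]; rfl
  constructor
  · intro hs
    have : s.image e₁ ∈ T₂.faces.image (fun t => t.image e₂) := by
      rw [← h]; exact Finset.mem_image_of_mem _ hs
    obtain ⟨t, ht, hte⟩ := Finset.mem_image.mp this
    have : s.image (e₁.trans e₂.symm) = t := by
      rw [himg, ← hte, Finset.image_image]
      simp
    rwa [this]
  · intro hs
    have : (s.image (e₁.trans e₂.symm)).image e₂ ∈
        T₁.faces.image (fun t => t.image e₁) := by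
      rw [h]; exact Finset.mem_image_of_mem _ hs
    have heq : (s.image (e₁.trans e₂.symm)).image e₂ = s.image e₁ := by
      rw [himg, Finset.image_image]
      have : (⇑e₂ ∘ ⇑e₂.symm) ∘ ⇑e₁ = ⇑e₁ := by
        ext x; simp
      rw [Function.comp_def] at this ⊢
      simp
    rw [heq] at this
    obtain ⟨u, hu, hue⟩ := Finset.mem_image.mp this
    have : u = s := by
      have hinj : Function.Injective (fun t : Finset T₁.V => t.image e₁) := fun x y hxy =>
        Finset.image_injective e₁.injective hxy
      exact hinj hue
    rwa [← this]

/-- Every triangulation of a closed manifold admits only finitely many edge expansions,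
up to simplicial isomorphism: there is a finite list of triangulations such that every
edge expansion of `T'` (i.e. every `T` contracting to `T'`) is isomorphic to one of them. -/
theorem finitely_many_edge_expansions (M : Type) [TopologicalSpace M] (T' : Triang M) :
    ∃ (n : ℕ) (L : Fin n → Triang M),
      ∀ T : Triang M, IsContraction T T' → ∃ i : Fin n, TriangIso T (L i) := by
  classical
  let K := Finset (Finset (Option T'.V))
  let Good : K → Triang M → Prop := fun k T =>
    ∃ e : T.V ≃ Option T'.V, T.faces.image (fun s => s.image e) = k
  let en : Fin (Fintype.card K) ≃ K := (Fintype.equivFin K).symm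
  refine ⟨Fintype.card K, fun i =>
    if h : ∃ T : Triang M, IsContraction T T' ∧ Good (en i) T then h.choose else T', ?_⟩
  intro T hT
  have key : ∃ k : K, Good k T := by
    obtain ⟨a, b, f, hab, _, hsurj, hfab, hfib, _⟩ := hT
    let g : T.V → Option T'.V := fun x => if x = b then none else some (f x)
    have hinj : Function.Injective g := by
      intro x y hxy
      by_cases hx : x = b <;> by_cases hy : y = b <;>
        simp only [g, hx, hy, if_pos, if_neg, ite_true, ite_false] at hxy
      · rw [hx, hy]
      · exact absurd hxy (by simp [hy])
      · exact absurd hxy (by simp [hx])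
      · have := hfib x y (Option.some_injective _ hxy)
        rcases this with h | h
        · exact h
        · exfalso
          have hbx : b ∈ ({x, y} : Finset T.V) := by
            rw [h]; simp
          simp only [Finset.mem_insert, Finset.mem_singleton] at hbx
          rcases hbx with h1 | h1 <;> [exact hx h1.symm; exact hy h1.symm]
    have hsur : Function.Surjective g := by
      intro v
      cases v with
      | none => exact ⟨b, by simp [g]⟩
      | some v =>
        obtain ⟨x, hx⟩ := hsurj v
        by_cases hxb : x = b
        · refine ⟨a, ?_⟩
          simp only [g, if_neg hab]
          rw [hfab, ← hxb, hx]
        · exact ⟨x, by simp [g, hxb, hx]⟩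
    exact ⟨_, Equiv.ofBijective g ⟨hinj, hsur⟩, rfl⟩
  obtain ⟨k, hk⟩ := key
  refine ⟨en.symm k, ?_⟩
  have hex : ∃ T0 : Triang M, IsContraction T0 T' ∧ Good (en (en.symm k)) T0 := by
    rw [en.apply_symm_apply]; exact ⟨T, hT, hk⟩
  simp only [dif_pos hex]
  obtain ⟨e₁, he₁⟩ := hk
  obtain ⟨e₂, he₂⟩ := hex.choose_spec.2
  apply triangIso_of_images_eq e₁ e₂
  convert he₁.trans (he₂.trans (en.apply_symm_apply k)).symm using 2 <;>
    (funext s; congr; exact Subsingleton.elim _ _)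

end
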